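/- arXiv:math/0605491 — 5 statements merged into one kernel-verified Lean document; each statement's English description precedes it below -/
import Mathlib

section
/- Let (X, ρ) be a metric space and (x_i^n, 1 ≤ i ≤ n, n ≥ 1) ⊆ X a triangular array such that the empirical measures R̂_n = (1/n)∑_{i=1}^n δ_{x_i^n} converge weakly to a probability measure R with support Y. Then for each n there exists a subset B_n ⊆ {x_i^n : 1 ≤ i ≤ n} such that: (1) card(B_n)/n → 1; (2) the normalized empirical measure on B_n converges weakly to R; and (3) sup{ρ(x, Y) : x ∈ B_n} → 0 as n → ∞. -/
/-!
The empirical measures live on the countable set of array points, so their weak limit `R` is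
concentrated on its separable closure; this makes the support `Y` of `R` conull although `X`
need not be separable. Testing the weak convergence against `y ↦ min 1 (ρ(y, Y) / δ)`, which
integrates to zero against `R`, shows that for each `δ > 0` the fraction of points at distance
at least `δ` from `Y` tends to zero. A diagonal choice `δₙ → 0` yields bulk sets
`Bₙ = {i : ρ(xᵢⁿ, Y) < δₙ}` with negligible complements, and discarding a negligible fraction of
the terms does not change the limit of a bounded average.
-/

open MeasureTheory Filter

/-- The topological support of a measure: points all of whose neighborhoods have
positive measure. -/
def msupport {X : Type*} [TopologicalSpace X] [MeasurableSpace X] (R : Measure X) : Set X :=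
  {a | ∀ U ∈ nhds a, R U ≠ 0}

open Metric Finset Topology NNReal

lemma msupport_eq_support {X : Type*} [TopologicalSpace X] [MeasurableSpace X]
    (μ : Measure X) : msupport μ = μ.support := by
  ext a
  simp only [Measure.mem_support_iff_forall, pos_iff_ne_zero]
  rfl

lemma MeasureTheory.Measure.support_mem_ae_of_isSeparable {X : Type*} [TopologicalSpace X]
    [TopologicalSpace.PseudoMetrizableSpace X] [MeasurableSpace X] {μ : Measure X} {s : Set X}
    (hs : TopologicalSpace.IsSeparable s) (h : s ∈ ae μ) : μ.support ∈ ae μ := by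
  have hK : IsLindelof (μ.supportᶜ ∩ s) := by
    have := (hs.mono (Set.inter_subset_right (s := μ.supportᶜ))).secondCountableTopology
    exact isLindelof_iff_lindelofSpace.2 inferInstance
  have hnull : (μ.supportᶜ ∩ s)ᶜ ∈ ae μ := hK.compl_mem_sets_of_nhdsWithin fun y hy => by
    obtain ⟨U, hU, hU0⟩ := Measure.notMem_support_iff_exists.mp hy.1
    exact ⟨U, mem_nhdsWithin_of_mem_nhds hU, compl_mem_ae_iff.2 hU0⟩
  filter_upwards [hnull, h] with y hy hys
  by_contra hy'
  exact hy ⟨hy', hys⟩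

section Cutoff

variable {X : Type*} [PseudoMetricSpace X]

noncomputable def infDistCutoff (s : Set X) (δ : ℝ≥0) : BoundedContinuousFunction X ℝ :=
  .mkOfBound ⟨fun y => min 1 (infDist y s / δ), by fun_prop⟩ 1 fun y z =>
    Real.dist_le_of_mem_Icc_01 ⟨le_min zero_le_one (div_nonneg infDist_nonneg δ.2), min_le_left _ _⟩
      ⟨le_min zero_le_one (div_nonneg infDist_nonneg δ.2), min_le_left _ _⟩

variable {s : Set X} {δ : ℝ≥0} {y : X}

lemma infDistCutoff_apply : infDistCutoff s δ y = min 1 (infDist y s / δ) := rfl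

lemma infDistCutoff_nonneg : 0 ≤ infDistCutoff s δ y :=
  le_min zero_le_one (div_nonneg infDist_nonneg δ.2)

lemma infDistCutoff_eq_zero_of_mem (hy : y ∈ s) : infDistCutoff s δ y = 0 := by
  simp [infDistCutoff_apply, infDist_zero_of_mem hy]

lemma infDist_eq_zero_of_infDistCutoff_eq_zero (hδ : 0 < δ) (hy : infDistCutoff s δ y = 0) :
    infDist y s = 0 := by
  rw [infDistCutoff_apply] at hy
  rcases min_choice 1 (infDist y s / δ) with h | h <;> rw [h] at hy
  · exact absurd hy one_ne_zero
  · exact (div_eq_zero_iff.1 hy).resolve_right (by exact_mod_cast hδ.ne')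

lemma infDistCutoff_eq_one (hδ : 0 < δ) (hy : δ ≤ infDist y s) : infDistCutoff s δ y = 1 :=
  min_eq_left ((one_le_div hδ).2 hy)

end Cutoff

lemma exists_tendsto_atTop_tendsto_diag {β : Type*} [PseudoMetricSpace β] {f : ℕ → ℕ → β}
    {b : β} (hf : ∀ m, Tendsto (f m) atTop (𝓝 b)) :
    ∃ φ : ℕ → ℕ, Tendsto φ atTop atTop ∧ Tendsto (fun n => f (φ n) n) atTop (𝓝 b) := by
  choose N hN using fun m => Metric.tendsto_atTop.1 (hf m) (1 / ((m : ℝ) + 1)) (by positivity)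
  -- `φ n` is the largest `m ≤ n` whose threshold `N m` has been passed by `n`.
  set φ : ℕ → ℕ := fun n => Nat.findGreatest (fun m => N m ≤ n) n
  have hφ : Tendsto φ atTop atTop := tendsto_atTop.2 fun k => eventually_atTop.2
    ⟨max (N k) k, fun n hn => Nat.le_findGreatest (le_of_max_le_right hn) (le_of_max_le_left hn)⟩
  refine ⟨φ, hφ, tendsto_iff_dist_tendsto_zero.2 <| squeeze_zero' (.of_forall fun n => dist_nonneg)
    ?_ (tendsto_one_div_add_atTop_nhds_zero_nat.comp hφ)⟩
  filter_upwards [eventually_ge_atTop (N 0)] with n hn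
  exact (hN _ _ (Nat.findGreatest_spec (P := fun m => N m ≤ n) (Nat.zero_le n) hn)).le

section SubAverage

variable {B : ℕ → Finset ℕ}

lemma tendsto_card_div_of_tendsto_card_sdiff_div (hB : ∀ n, B n ⊆ range n)
    (h : Tendsto (fun n => (#(range n \ B n) : ℝ) / n) atTop (𝓝 0)) :
    Tendsto (fun n => (#(B n) : ℝ) / n) atTop (𝓝 1) := by
  have h1 : Tendsto (fun n => 1 - (#(range n \ B n) : ℝ) / n) atTop (𝓝 1) := by
    simpa using (tendsto_const_nhds (x := (1 : ℝ))).sub h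
  refine h1.congr' ?_
  filter_upwards [eventually_ge_atTop 1] with n hn
  have hcard : (#(range n \ B n) : ℝ) + #(B n) = n := by
    exact_mod_cast (card_sdiff_add_card_eq_card (hB n)).trans (card_range n)
  have hn0 : (n : ℝ) ≠ 0 := by positivity
  field_simp
  linarith

lemma tendsto_average_of_tendsto_card_sdiff_div (hB : ∀ n, B n ⊆ range n)
    (h : Tendsto (fun n => (#(range n \ B n) : ℝ) / n) atTop (𝓝 0))
    {a : ℕ → ℕ → ℝ} {C : ℝ} (ha : ∀ n i, ‖a n i‖ ≤ C) {l : ℝ}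
    (hl : Tendsto (fun n : ℕ => (n : ℝ)⁻¹ * ∑ i ∈ range n, a n i) atTop (𝓝 l)) :
    Tendsto (fun n => (#(B n) : ℝ)⁻¹ * ∑ i ∈ B n, a n i) atTop (𝓝 l) := by
  have hrest : Tendsto (fun n : ℕ => (n : ℝ)⁻¹ * ∑ i ∈ range n \ B n, a n i) atTop (𝓝 0) := by
    refine squeeze_zero_norm (fun n : ℕ => ?_) (by simpa using h.const_mul C)
    calc ‖(n : ℝ)⁻¹ * ∑ i ∈ range n \ B n, a n i‖
        ≤ (n : ℝ)⁻¹ * (#(range n \ B n) • C) := by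
          rw [norm_mul, norm_inv, Real.norm_natCast]
          gcongr
          exact (norm_sum_le _ _).trans (sum_le_card_nsmul _ _ _ fun i _ => ha n i)
      _ = C * (#(range n \ B n) / n) := by rw [nsmul_eq_mul]; ring
  have hinv := (tendsto_card_div_of_tendsto_card_sdiff_div hB h).inv₀ one_ne_zero
  have hlim : Tendsto (fun n => ((#(B n) : ℝ) / n)⁻¹ * ((n : ℝ)⁻¹ * ∑ i ∈ range n, a n i -
      (n : ℝ)⁻¹ * ∑ i ∈ range n \ B n, a n i)) atTop (𝓝 l) := by
    simpa using hinv.mul (hl.sub hrest)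
  refine hlim.congr' ?_
  filter_upwards [eventually_ge_atTop 1] with n hn
  have hn0 : (n : ℝ) ≠ 0 := by positivity
  rw [← sum_sdiff (hB n), inv_div]
  field_simp
  ring

end SubAverage

section Empirical

variable {X : Type*} [PseudoMetricSpace X] [MeasurableSpace X]

def HasEmpiricalWeakLimit (x : ℕ → ℕ → X) (μ : Measure X) : Prop :=
  ∀ f : BoundedContinuousFunction X ℝ,
    Tendsto (fun n : ℕ => (n : ℝ)⁻¹ * ∑ i ∈ range n, f (x n i)) atTop (𝓝 (∫ a, f a ∂μ))

variable {x : ℕ → ℕ → X} {μ : Measure X}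

lemma HasEmpiricalWeakLimit.closure_range_mem_ae [OpensMeasurableSpace X] [IsFiniteMeasure μ]
    (h : HasEmpiricalWeakLimit x μ) : closure (Set.range (Function.uncurry x)) ∈ ae μ := by
  set g := infDistCutoff (Set.range (Function.uncurry x)) 1
  have hg : ∀ n i, g (x n i) = 0 := fun n i =>
    infDistCutoff_eq_zero_of_mem (Set.mem_range_self (f := Function.uncurry x) (n, i))
  have hint : ∫ y, g y ∂μ = 0 := tendsto_nhds_unique (h g) (by simp [hg])
  filter_upwards [(integral_eq_zero_iff_of_nonneg (fun _ => infDistCutoff_nonneg)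
    (g.integrable μ)).1 hint] with y hy
  exact (mem_closure_iff_infDist_zero (Set.range_nonempty _)).2
    (infDist_eq_zero_of_infDistCutoff_eq_zero one_pos hy)

lemma HasEmpiricalWeakLimit.tendsto_card_far_div (h : HasEmpiricalWeakLimit x μ) {s : Set X}
    (hs : s ∈ ae μ) {δ : ℝ} (hδ : 0 < δ) :
    Tendsto (fun n => (#{i ∈ range n | δ ≤ infDist (x n i) s} : ℝ) / n) atTop (𝓝 0) := by
  set g := infDistCutoff s ⟨δ, hδ.le⟩
  have hint : ∫ y, g y ∂μ = 0 :=
    integral_eq_zero_of_ae (mem_of_superset hs fun y hy => infDistCutoff_eq_zero_of_mem hy)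
  refine squeeze_zero (fun n => by positivity) (fun n => ?_) (hint ▸ h g)
  rw [div_eq_inv_mul, ← sum_boole]
  gcongr with i
  split_ifs with hi
  exacts [(infDistCutoff_eq_one (δ := ⟨δ, hδ.le⟩) hδ hi).ge, infDistCutoff_nonneg]

end Empirical

/-- Decomposition of a triangular array whose empirical measures converge weakly to `R`:
there are index sets `B n` of the bulk points such that `card (B n) / n → 1`, the empirical
measure on `B n` still converges weakly to `R`, and all points of `B n` are uniformly close
to the support of `R` asymptotically. -/
theorem bulk_decomposition {X : Type*} [MetricSpace X] [MeasurableSpace X] [BorelSpace X]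
    (x : ℕ → ℕ → X) (R : Measure X) [IsProbabilityMeasure R]
    (hweak : ∀ f : BoundedContinuousFunction X ℝ,
      Tendsto (fun n : ℕ => (n : ℝ)⁻¹ * ∑ i ∈ Finset.range n, f (x n i)) atTop
        (nhds (∫ a, f a ∂ R))) :
    ∃ B : ℕ → Finset ℕ,
      (∀ n, B n ⊆ Finset.range n) ∧
      Tendsto (fun n => ((B n).card : ℝ) / n) atTop (nhds 1) ∧
      (∀ f : BoundedContinuousFunction X ℝ,
        Tendsto (fun n => ((B n).card : ℝ)⁻¹ * ∑ i ∈ B n, f (x n i)) atTop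
          (nhds (∫ a, f a ∂ R))) ∧
      (∀ ε > 0, ∀ᶠ n in atTop, ∀ i ∈ B n, Metric.infDist (x n i) (msupport R) < ε) := by
  have hlim : HasEmpiricalWeakLimit x R := hweak
  have hY : msupport R ∈ ae R := by
    rw [msupport_eq_support]
    exact Measure.support_mem_ae_of_isSeparable
      (Set.countable_range _).isSeparable.closure hlim.closure_range_mem_ae
  obtain ⟨φ, hφ, hfar⟩ := exists_tendsto_atTop_tendsto_diag fun m =>
    hlim.tendsto_card_far_div hY (δ := 1 / ((m : ℝ) + 1)) (by positivity)
  set B : ℕ → Finset ℕ :=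
    fun n => {i ∈ range n | infDist (x n i) (msupport R) < 1 / ((φ n : ℝ) + 1)}
  have hB : ∀ n, B n ⊆ range n := fun n => filter_subset _ _
  have hsdiff : Tendsto (fun n => (#(range n \ B n) : ℝ) / n) atTop (𝓝 0) := by
    refine hfar.congr fun n => ?_
    simp only [B, ← filter_not, not_lt]
  refine ⟨B, hB, tendsto_card_div_of_tendsto_card_sdiff_div hB hsdiff,
    fun f => tendsto_average_of_tendsto_card_sdiff_div hB hsdiff (fun n i => f.norm_coe_le_norm _)
      (hlim f), fun ε hε => ?_⟩
  filter_upwards [(tendsto_one_div_add_atTop_nhds_zero_nat.comp hφ).eventually (gt_mem_nhds hε)]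
    with n hn i hi
  exact (mem_filter.1 hi).2.trans hn
end

section
/- Let Z be ℝ^d-valued with E exp(α|Z|) < ∞ for some α > 0, let (Z_i) be i.i.d. copies, let C_n ⊆ X with card(C_n)/n → 0, and let f: X → ℝ^{m×d} be such that {f(x) : x ∈ C_n, n ≥ 1} is bounded by a constant M. Then π_n = (1/n) ∑_{x_i^n ∈ C_n} f(x_i^n)·Z_i converges to 0 in probability; more precisely, for every δ > 0, limsup_n (1/n) log P(|π_n| > δ) ≤ −κδ/M' for suitable constants, and in particular P(|π_n| > δ) → 0. -/
/-!
With the weights bounded by `M`, `‖π n‖ ≤ (L / n) ∑_{i ∈ C n} ‖Z i‖` for `L = max (d M) 1`.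
The Chernoff bound for this i.i.d. sum at the exponential moment `α` gives
`P(‖π n‖ > δ) ≤ exp (n (-α δ / L + (#C n / n) log E e^{α ‖Z 0‖}))`, and the second term of
the exponent vanishes because `#C n = o(n)`.
-/

open MeasureTheory Filter
open scoped ENNReal

noncomputable section

/-- Large deviation bounds along the speed sequence `φ n` for the random variables
`W (φ n)`, with rate function `I` taking values in `[0, ∞]`. -/
def LDPAlong {Ω E : Type*} [MeasurableSpace Ω] [TopologicalSpace E]
    (μ : Measure Ω) (φ : ℕ → ℕ) (W : ℕ → Ω → E) (I : E → ℝ≥0∞) : Prop :=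
  (∀ F : Set E, IsClosed F →
      Filter.limsup
        (fun n => (((φ n : ℝ))⁻¹ : EReal) * ENNReal.log (μ {ω | W (φ n) ω ∈ F}))
        Filter.atTop ≤ -(⨅ x ∈ F, (I x : EReal))) ∧
  (∀ G : Set E, IsOpen G →
      -(⨅ x ∈ G, (I x : EReal)) ≤
      Filter.liminf
        (fun n => (((φ n : ℝ))⁻¹ : EReal) * ENNReal.log (μ {ω | W (φ n) ω ∈ G}))
        Filter.atTop)

/-- The large deviation principle at speed `n` for the sequence `W n`. -/
def LDP {Ω E : Type*} [MeasurableSpace Ω] [TopologicalSpace E]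
    (μ : Measure Ω) (W : ℕ → Ω → E) (I : E → ℝ≥0∞) : Prop :=
  LDPAlong μ id W I

/-- A good rate function: lower semicontinuous with compact sublevel sets. -/
def GoodRate {E : Type*} [TopologicalSpace E] (I : E → ℝ≥0∞) : Prop :=
  LowerSemicontinuous I ∧ ∀ c : ℝ≥0∞, c ≠ ⊤ → IsCompact {x | I x ≤ c}

open ProbabilityTheory Real Finset Topology

lemma norm_mulVec_le_card_mul {R l k : Type*} [NormedRing R] [Fintype l] [Fintype k]
    (A : l → k → R) (v : k → R) :
    ‖Matrix.mulVec A v‖ ≤ Fintype.card k * ‖A‖ * ‖v‖ := by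
  refine (pi_norm_le_iff_of_nonneg (by positivity)).2 fun j => ?_
  calc ‖Matrix.mulVec A v j‖ ≤ ∑ i, ‖A j i * v i‖ := norm_sum_le _ _
    _ ≤ ∑ _i : k, ‖A‖ * ‖v‖ := by
        gcongr with i
        exact (norm_mul_le _ _).trans <| mul_le_mul
          ((norm_le_pi_norm _ i).trans (norm_le_pi_norm A j)) (norm_le_pi_norm v i)
          (norm_nonneg _) (norm_nonneg _)
    _ = Fintype.card k * ‖A‖ * ‖v‖ := by simp [mul_assoc]

lemma norm_sum_mulVec_le {R ι l k : Type*} [NormedRing R] [Fintype l] [Fintype k]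
    (s : Finset ι) (A : ι → l → k → R) (v : ι → k → R) {M : ℝ}
    (hA : ∀ i ∈ s, ‖A i‖ ≤ M) :
    ‖∑ i ∈ s, Matrix.mulVec (A i) (v i)‖ ≤ Fintype.card k * M * ∑ i ∈ s, ‖v i‖ := by
  rw [mul_sum]
  refine (norm_sum_le _ _).trans (sum_le_sum fun i hi => ?_)
  exact (norm_mulVec_le_card_mul _ _).trans (by gcongr; exact hA i hi)

lemma measureReal_sum_ge_le_exp_mul_mgf_pow {Ω ι : Type*} [MeasurableSpace Ω] {μ : Measure Ω}
    [IsProbabilityMeasure μ] {X : ι → Ω → ℝ} (hmeas : ∀ i, Measurable (X i))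
    (hindep : iIndepFun X μ) {j : ι} (hident : ∀ i, IdentDistrib (X i) (X j) μ μ)
    {t : ℝ} (ht : 0 ≤ t) (hint : Integrable (fun ω => exp (t * X j ω)) μ)
    (s : Finset ι) (ε : ℝ) :
    μ.real {ω | ε ≤ ∑ i ∈ s, X i ω} ≤ exp (-t * ε) * mgf (X j) μ t ^ s.card := by
  have hint_i : ∀ i ∈ s, Integrable (fun ω => exp (t * X i ω)) μ := fun i _ =>
    ((hident i).comp (measurable_const_mul t).exp).integrable_iff.2 hint
  have hmgf : mgf (∑ i ∈ s, X i) μ t = mgf (X j) μ t ^ s.card := by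
    rw [hindep.mgf_sum hmeas,
      prod_eq_pow_card fun i _ => congrFun (mgf_congr_identDistrib (hident i)) t]
  simpa only [Finset.sum_apply, hmgf] using
    measure_ge_le_exp_mul_mgf ε ht (hindep.integrable_exp_mul_sum hmeas hint_i)

lemma measure_norm_smul_sum_mulVec_gt_le {Ω ι k l : Type*} [MeasurableSpace Ω] {μ : Measure Ω}
    [IsProbabilityMeasure μ] [Fintype k] [Fintype l] {Z : ι → Ω → k → ℝ}
    (hmeas : ∀ i, Measurable (Z i)) (hindep : iIndepFun Z μ) {j : ι}
    (hident : ∀ i, IdentDistrib (Z i) (Z j) μ μ) {α : ℝ} (hα : 0 ≤ α)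
    (hint : Integrable (fun ω => exp (α * ‖Z j ω‖)) μ)
    (s : Finset ι) (A : ι → l → k → ℝ) {M L : ℝ} (hA : ∀ i ∈ s, ‖A i‖ ≤ M)
    (hL : 0 < L) (hML : Fintype.card k * M ≤ L) {n : ℕ} (hn : 0 < n) (δ : ℝ) :
    μ {ω | δ < ‖(n : ℝ)⁻¹ • ∑ i ∈ s, Matrix.mulVec (A i) (Z i ω)‖} ≤
      ENNReal.ofReal (exp (n * (-(α / L * δ) +
        s.card / n * log (mgf (fun ω => ‖Z j ω‖) μ α)))) := by
  have hn' : (0 : ℝ) < n := Nat.cast_pos.2 hn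
  have hsub : {ω | δ < ‖(n : ℝ)⁻¹ • ∑ i ∈ s, Matrix.mulVec (A i) (Z i ω)‖} ⊆
      {ω | n * δ / L ≤ ∑ i ∈ s, ‖Z i ω‖} := by
    intro ω hω
    have hT : 0 ≤ ∑ i ∈ s, ‖Z i ω‖ := sum_nonneg fun i _ => norm_nonneg _
    have : δ < (n : ℝ)⁻¹ * (L * ∑ i ∈ s, ‖Z i ω‖) := by
      refine hω.trans_le ?_
      rw [norm_smul, Real.norm_of_nonneg (by positivity)]
      gcongr
      exact (norm_sum_mulVec_le s A _ hA).trans (by gcongr)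
    rw [Set.mem_ofPred_eq, div_le_iff₀ hL]
    rw [inv_mul_eq_div, lt_div_iff₀ hn'] at this
    linarith
  have hK : 0 < mgf (fun ω => ‖Z j ω‖) μ α := mgf_pos hint
  have hexp : exp (-α * (n * δ / L)) * mgf (fun ω => ‖Z j ω‖) μ α ^ s.card =
      exp (n * (-(α / L * δ) + s.card / n * log (mgf (fun ω => ‖Z j ω‖) μ α))) := by
    rw [← exp_log (pow_pos hK _), ← exp_add, log_pow]
    congr 1
    field_simp
  calc _ ≤ μ {ω | n * δ / L ≤ ∑ i ∈ s, ‖Z i ω‖} := measure_mono hsub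
    _ = ENNReal.ofReal (μ.real {ω | n * δ / L ≤ ∑ i ∈ s, ‖Z i ω‖}) := (ofReal_measureReal).symm
    _ ≤ _ := by
      rw [← hexp]
      exact ENNReal.ofReal_le_ofReal <| measureReal_sum_ge_le_exp_mul_mgf_pow
        (fun i => (hmeas i).norm) (hindep.comp _ fun _ => measurable_norm)
        (fun i => (hident i).comp measurable_norm) hα hint s _

lemma limsup_inv_mul_log_le_of_le_exp {p : ℕ → ℝ≥0∞} {b : ℕ → ℝ} {L : ℝ}
    (hp : ∀ᶠ n in atTop, p n ≤ ENNReal.ofReal (exp (n * b n)))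
    (hb : Tendsto b atTop (𝓝 L)) :
    limsup (fun n : ℕ => (((n : ℝ))⁻¹ : EReal) * ENNReal.log (p n)) atTop ≤ (L : EReal) := by
  have hle : ∀ᶠ n : ℕ in atTop, (((n : ℝ))⁻¹ : EReal) * ENNReal.log (p n) ≤ (b n : EReal) := by
    filter_upwards [hp, eventually_gt_atTop 0] with n hpn hn
    have hn' : (0 : ℝ) < n := Nat.cast_pos.2 hn
    have hlog : ENNReal.log (p n) ≤ ((n * b n : ℝ) : EReal) := by
      calc ENNReal.log (p n) ≤ ENNReal.log (ENNReal.ofReal (exp (n * b n))) :=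
            ENNReal.log_monotone hpn
        _ = ((n * b n : ℝ) : EReal) := by
            rw [ENNReal.log_ofReal_of_pos (exp_pos _), log_exp]
    rw [← EReal.coe_inv]
    calc (((n : ℝ)⁻¹ : ℝ) : EReal) * ENNReal.log (p n)
        ≤ (((n : ℝ)⁻¹ : ℝ) : EReal) * ((n * b n : ℝ) : EReal) :=
          mul_le_mul_of_nonneg_left hlog (by exact_mod_cast (inv_pos.2 hn').le)
      _ = (b n : EReal) := by
          rw [← EReal.coe_mul, inv_mul_cancel_left₀ hn'.ne']
  calc _ ≤ limsup (fun n => (b n : EReal)) atTop := limsup_le_limsup hle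
    _ = L := (EReal.tendsto_coe.2 hb).limsup_eq

lemma tendsto_zero_of_le_exp {p : ℕ → ℝ≥0∞} {b : ℕ → ℝ} {L : ℝ} (hL : L < 0)
    (hp : ∀ᶠ n in atTop, p n ≤ ENNReal.ofReal (exp (n * b n)))
    (hb : Tendsto b atTop (𝓝 L)) :
    Tendsto p atTop (𝓝 0) := by
  have hle : ∀ᶠ n : ℕ in atTop, p n ≤ ENNReal.ofReal (exp (n * (L / 2))) := by
    filter_upwards [hp, hb.eventually_le_const (by linarith : L < L / 2)] with n hpn hbn
    exact hpn.trans (ENNReal.ofReal_le_ofReal (exp_le_exp.2 (by gcongr)))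
  have hlim : Tendsto (fun n : ℕ => ENNReal.ofReal (exp (n * (L / 2)))) atTop (𝓝 0) := by
    rw [← ENNReal.ofReal_zero]
    exact ENNReal.tendsto_ofReal <| tendsto_exp_atBot.comp <|
      tendsto_natCast_atTop_atTop.atTop_mul_const_of_neg (by linarith)
  exact tendsto_of_tendsto_of_tendsto_of_le_of_le' tendsto_const_nhds hlim
    (Eventually.of_forall fun _ => zero_le) hle

theorem partial_mean_negligible_general {Ω : Type*} [MeasurableSpace Ω] (μ : Measure Ω)
    [IsProbabilityMeasure μ] {d m : ℕ} (Z : ℕ → Ω → (Fin d → ℝ))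
    (hmeas : ∀ i, Measurable (Z i))
    (hindep : ProbabilityTheory.iIndepFun Z μ)
    (hident : ∀ i, μ.map (Z i) = μ.map (Z 0))
    (hexp : ∃ α > 0, Integrable (fun ω => Real.exp (α * ‖Z 0 ω‖)) μ)
    (C : ℕ → Finset ℕ)
    (hC : Tendsto (fun n : ℕ => ((C n).card : ℝ) / n) atTop (nhds 0))
    (a : ℕ → ℕ → (Fin m → Fin d → ℝ)) (M : ℝ)
    (ha : ∀ n, ∀ i ∈ C n, ‖a n i‖ ≤ M) :
    ∀ δ > (0 : ℝ),
      (∃ c > (0 : ℝ),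
        Filter.limsup
          (fun n : ℕ => (((n : ℝ))⁻¹ : EReal) * ENNReal.log
            (μ {ω | δ < ‖(n : ℝ)⁻¹ • ∑ i ∈ C n, Matrix.mulVec (a n i) (Z i ω)‖}))
          atTop ≤ ((-(c * δ) : ℝ) : EReal)) ∧
      Tendsto
        (fun n : ℕ => μ {ω | δ < ‖(n : ℝ)⁻¹ • ∑ i ∈ C n, Matrix.mulVec (a n i) (Z i ω)‖})
        atTop (nhds 0) := by
  obtain ⟨α, hα, hint⟩ := hexp
  intro δ hδ
  set L := max (d * M) 1
  have hL : 0 < L := zero_lt_one.trans_le (le_max_right _ _)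
  set K := mgf (fun ω => ‖Z 0 ω‖) μ α
  have hb : Tendsto (fun n : ℕ => -(α / L * δ) + (C n).card / n * log K) atTop
      (𝓝 (-(α / L * δ))) := by
    simpa using (hC.mul_const (log K)).const_add (-(α / L * δ))
  have hbound := (eventually_gt_atTop 0).mono fun n hn =>
    measure_norm_smul_sum_mulVec_gt_le hmeas hindep
      (fun i => ⟨(hmeas i).aemeasurable, (hmeas 0).aemeasurable, hident i⟩) hα.le hint
      (C n) (a n) (ha n) hL (by simp [L]) hn δ
  have hrate : -(α / L * δ) < 0 := by simp only [neg_lt_zero]; positivity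
  exact ⟨⟨α / L, by positivity, limsup_inv_mul_log_le_of_le_exp hbound hb⟩,
    tendsto_zero_of_le_exp hrate hbound hb⟩

/-- If `(Z i)` are i.i.d. with an exponential moment, `card (C n) / n → 0`, and the matrix
weights are bounded by `M`, then `π n = (1/n) ∑_{i ∈ C n} a n i · Z i` satisfies a Chernoff
bound `limsup (1/n) log P(|π n| > δ) ≤ -cδ` for some `c > 0`, and in particular
`π n → 0` in probability. -/
theorem partial_mean_negligible {Ω : Type*} [MeasurableSpace Ω] (μ : Measure Ω)
    [IsProbabilityMeasure μ] {d m : ℕ} (Z : ℕ → Ω → (Fin d → ℝ))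
    (hmeas : ∀ i, Measurable (Z i))
    (hindep : ProbabilityTheory.iIndepFun Z μ)
    (hident : ∀ i, μ.map (Z i) = μ.map (Z 0))
    (hexp : ∃ α > 0, Integrable (fun ω => Real.exp (α * ‖Z 0 ω‖)) μ)
    (C : ℕ → Finset ℕ) (hCn : ∀ n, C n ⊆ Finset.range n)
    (hC : Tendsto (fun n : ℕ => ((C n).card : ℝ) / n) atTop (nhds 0))
    (a : ℕ → ℕ → (Fin m → Fin d → ℝ)) (M : ℝ)
    (ha : ∀ n, ∀ i ∈ C n, ‖a n i‖ ≤ M) :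
    ∀ δ > (0 : ℝ),
      (∃ c > (0 : ℝ),
        Filter.limsup
          (fun n : ℕ => (((n : ℝ))⁻¹ : EReal) * ENNReal.log
            (μ {ω | δ < ‖(n : ℝ)⁻¹ • ∑ i ∈ C n, Matrix.mulVec (a n i) (Z i ω)‖}))
          atTop ≤ ((-(c * δ) : ℝ) : EReal)) ∧
      Tendsto
        (fun n : ℕ => μ {ω | δ < ‖(n : ℝ)⁻¹ • ∑ i ∈ C n, Matrix.mulVec (a n i) (Z i ω)‖})
        atTop (nhds 0) :=
  partial_mean_negligible_general μ Z hmeas hindep hident hexp C hC a M ha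
end
end

section
/- Let X, Y be independent standard Gaussian random variables and Z = (X², Y², XY) ∈ ℝ³. Then (1/n)Z satisfies a large deviation principle on ℝ³ with good rate function I(x,y,z) = x/2 + y/2 if x ≥ 0, y ≥ 0 and z² = xy, and I(x,y,z) = +∞ otherwise. In particular I is not convex (e.g. I(1,1,1) = I(1,1,−1) = 1 but I(1,1,0) = +∞). -/
open MeasureTheory Filter
open scoped ENNReal

noncomputable section

/-!
Writing `sqMap w = (w₁², w₂², w₁w₂)`, the vector `Z / n` equals `sqMap ((X, Y) / √n)` and
`I (t • sqMap w) = t ‖w‖² / 2` (Euclidean norm), so `I` is the contraction along `sqMap` of the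
Gaussian rate `‖w‖² / 2` and is finite exactly on the range of `sqMap`.
Upper bound: `Z / n ∈ F` forces `X² + Y² ≥ 2 n inf_F I`, and the exponential Chebyshev inequality
with `exp (θ (X² + Y²))`, `θ < 1/2`, bounds the probability of this by `C_θ exp (-2 θ n inf_F I)`.
Lower bound: if `sqMap w₀ ∈ G` and the closed ball of radius `δ` around `w₀` lies in
`sqMap ⁻¹' G`, then the event contains the ball of radius `√n δ` around `√n w₀`, a square of
Gaussian mass at least `c_δ exp (-n ((|w₀₁| + δ)² + (|w₀₂| + δ)²) / 2)`.
-/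

open Real ProbabilityTheory Topology

theorem LDP.of_map {Ω Ω' E : Type*} [MeasurableSpace Ω] [MeasurableSpace Ω']
    [TopologicalSpace E] [MeasurableSpace E] [OpensMeasurableSpace E] {μ : Measure Ω}
    {V : Ω → Ω'} (hV : Measurable V) {f : ℕ → Ω' → E} (hf : ∀ n, Measurable (f n))
    {I : E → ℝ≥0∞} (h : LDP (μ.map V) f I) : LDP μ (fun n ω => f n (V ω)) I := by
  have hmap : ∀ n S, MeasurableSet S → μ.map V {x | f n x ∈ S} = μ {ω | f n (V ω) ∈ S} :=
    fun n _ hS => Measure.map_apply hV (hf n hS)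
  exact ⟨fun F hF => by simpa only [hmap _ _ hF.measurableSet] using h.1 F hF,
    fun G hG => by simpa only [hmap _ _ hG.measurableSet] using h.2 G hG⟩

section ExponentialScale

lemma natCast_inv_mul_log_le {n : ℕ} (hn : 0 < n) {u : ℝ≥0∞} {a : ℝ}
    (h : u ≤ ENNReal.ofReal (exp (n * a))) :
    ((n : ℝ)⁻¹ : EReal) * ENNReal.log u ≤ a := by
  have hlog : ENNReal.log u ≤ ((n * a : ℝ) : EReal) := by
    simpa [ENNReal.log_ofReal_of_pos (exp_pos _)] using ENNReal.log_monotone h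
  calc ((n : ℝ)⁻¹ : EReal) * ENNReal.log u ≤ ((n : ℝ)⁻¹ : EReal) * ((n * a : ℝ) : EReal) :=
        mul_le_mul_of_nonneg_left hlog (by positivity)
    _ = a := by rw [← EReal.coe_inv, ← EReal.coe_mul, inv_mul_cancel_left₀ (by positivity)]

lemma le_natCast_inv_mul_log {n : ℕ} (hn : 0 < n) {u : ℝ≥0∞} {a : ℝ}
    (h : ENNReal.ofReal (exp (n * a)) ≤ u) :
    (a : EReal) ≤ ((n : ℝ)⁻¹ : EReal) * ENNReal.log u := by
  have hlog : ((n * a : ℝ) : EReal) ≤ ENNReal.log u := by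
    simpa [ENNReal.log_ofReal_of_pos (exp_pos _)] using ENNReal.log_monotone h
  calc (a : EReal) = ((n : ℝ)⁻¹ : EReal) * ((n * a : ℝ) : EReal) := by
        rw [← EReal.coe_inv, ← EReal.coe_mul, inv_mul_cancel_left₀ (by positivity)]
    _ ≤ ((n : ℝ)⁻¹ : EReal) * ENNReal.log u := mul_le_mul_of_nonneg_left hlog (by positivity)

lemma eventually_le_ofReal_exp_natCast_mul {C : ℝ≥0∞} (hC : C ≠ ⊤) {d : ℝ} (hd : 0 < d) :
    ∀ᶠ n : ℕ in atTop, C ≤ ENNReal.ofReal (exp (n * d)) := by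
  have : Tendsto (fun n : ℕ => ENNReal.ofReal (exp (n * d))) atTop (𝓝 ⊤) :=
    ENNReal.tendsto_ofReal_atTop.comp
      (tendsto_exp_atTop.comp (tendsto_natCast_atTop_atTop.atTop_mul_const hd))
  exact (this.eventually_const_lt hC.lt_top).mono fun _ => le_of_lt

lemma eventually_ofReal_exp_natCast_mul_le {C : ℝ≥0∞} (hC : C ≠ 0) {d : ℝ} (hd : d < 0) :
    ∀ᶠ n : ℕ in atTop, ENNReal.ofReal (exp (n * d)) ≤ C := by
  have : Tendsto (fun n : ℕ => ENNReal.ofReal (exp (n * d))) atTop (𝓝 0) := by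
    simpa using ENNReal.tendsto_ofReal
      (tendsto_exp_atBot.comp (tendsto_natCast_atTop_atTop.atTop_mul_const_of_neg hd))
  exact (this.eventually_lt_const (pos_iff_ne_zero.2 hC)).mono fun _ => le_of_lt

lemma ofReal_exp_mul_mul_ofReal_exp_mul (x a b : ℝ) :
    ENNReal.ofReal (exp (x * a)) * ENNReal.ofReal (exp (x * b)) =
      ENNReal.ofReal (exp (x * (a + b))) := by
  rw [← ENNReal.ofReal_mul (exp_pos _).le, ← exp_add, mul_add]

theorem limsup_natCast_inv_mul_log_le {u : ℕ → ℝ≥0∞} {x : EReal}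
    (h : ∀ a : ℝ, x < a → ∃ C ≠ ⊤, ∀ᶠ n : ℕ in atTop, u n ≤ C * ENNReal.ofReal (exp (n * a))) :
    limsup (fun n : ℕ => ((n : ℝ)⁻¹ : EReal) * ENNReal.log (u n)) atTop ≤ x := by
  refine EReal.le_of_forall_lt_iff_le.1 fun b hxb => ?_
  obtain ⟨a, hxa, hab⟩ := EReal.lt_iff_exists_real_btwn.1 hxb
  obtain ⟨C, hC, hu⟩ := h a hxa
  refine limsup_le_of_le (by isBoundedDefault) ?_
  filter_upwards [hu, eventually_le_ofReal_exp_natCast_mul hC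
    (sub_pos.2 (EReal.coe_lt_coe_iff.1 hab)), eventually_gt_atTop 0] with n hun hCn hn
  refine natCast_inv_mul_log_le hn (hun.trans ?_)
  calc C * ENNReal.ofReal (exp (n * a))
      ≤ ENNReal.ofReal (exp (n * (b - a))) * ENNReal.ofReal (exp (n * a)) := by gcongr
    _ = ENNReal.ofReal (exp (n * b)) := by
      rw [ofReal_exp_mul_mul_ofReal_exp_mul, sub_add_cancel]

theorem le_liminf_natCast_inv_mul_log {u : ℕ → ℝ≥0∞} {x : EReal}
    (h : ∀ a : ℝ, a < x → ∃ C ≠ 0, ∀ᶠ n : ℕ in atTop, C * ENNReal.ofReal (exp (n * a)) ≤ u n) :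
    x ≤ liminf (fun n : ℕ => ((n : ℝ)⁻¹ : EReal) * ENNReal.log (u n)) atTop := by
  refine EReal.ge_of_forall_gt_iff_ge.1 fun b hbx => ?_
  obtain ⟨a, hba, hax⟩ := EReal.lt_iff_exists_real_btwn.1 hbx
  obtain ⟨C, hC, hu⟩ := h a hax
  refine le_liminf_of_le (by isBoundedDefault) ?_
  filter_upwards [hu, eventually_ofReal_exp_natCast_mul_le hC
    (sub_neg.2 (EReal.coe_lt_coe_iff.1 hba)), eventually_gt_atTop 0] with n hun hCn hn
  refine le_natCast_inv_mul_log hn (le_trans ?_ hun)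
  calc ENNReal.ofReal (exp (n * b))
      = ENNReal.ofReal (exp (n * (b - a))) * ENNReal.ofReal (exp (n * a)) := by
        rw [ofReal_exp_mul_mul_ofReal_exp_mul, sub_add_cancel]
    _ ≤ C * ENNReal.ofReal (exp (n * a)) := by gcongr

end ExponentialScale

section GaussianEstimates

lemma lintegral_exp_mul_sq_gaussianReal_ne_top {θ : ℝ} (hθ : θ < 1 / 2) :
    ∫⁻ x, ENNReal.ofReal (exp (θ * x ^ 2)) ∂gaussianReal 0 1 ≠ ⊤ := by
  rw [gaussianReal_of_var_ne_zero 0 one_ne_zero,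
    lintegral_withDensity_eq_lintegral_mul _ (measurable_gaussianPDF 0 1) (by fun_prop)]
  have hdensity : ∀ x : ℝ, gaussianPDF 0 1 x * ENNReal.ofReal (exp (θ * x ^ 2)) =
      ENNReal.ofReal ((√(2 * π))⁻¹ * exp (-(1 / 2 - θ) * x ^ 2)) := fun x => by
    rw [gaussianPDF, ← ENNReal.ofReal_mul (gaussianPDFReal_nonneg 0 1 x), gaussianPDFReal,
      mul_assoc, ← exp_add]
    congr 3 <;> simp; ring
  simp only [Pi.mul_apply, hdensity]
  exact (((integrable_exp_neg_mul_sq (sub_pos.2 hθ)).const_mul _).lintegral_lt_top).ne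

lemma measure_prod_le_sq_add_sq_le (μ₁ μ₂ : Measure ℝ) [SFinite μ₂] {θ : ℝ} (hθ : 0 ≤ θ)
    (s : ℝ) :
    μ₁.prod μ₂ {w | s ≤ w.1 ^ 2 + w.2 ^ 2} ≤
      (∫⁻ x, ENNReal.ofReal (exp (θ * x ^ 2)) ∂μ₁) *
        (∫⁻ x, ENNReal.ofReal (exp (θ * x ^ 2)) ∂μ₂) * ENNReal.ofReal (exp (-(θ * s))) := by
  have hS : MeasurableSet {w : ℝ × ℝ | s ≤ w.1 ^ 2 + w.2 ^ 2} :=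
    measurableSet_le measurable_const (by fun_prop)
  rw [← lintegral_indicator_one hS, ← lintegral_prod_mul (by fun_prop) (by fun_prop),
    ← lintegral_mul_const _ (by fun_prop)]
  refine lintegral_mono (Set.indicator_le fun w hw => ?_)
  rw [Pi.one_apply, ← ENNReal.ofReal_mul (exp_pos _).le, ← ENNReal.ofReal_mul (by positivity),
    ← exp_add, ← exp_add, ← ENNReal.ofReal_one, ← exp_zero]
  exact ENNReal.ofReal_le_ofReal (exp_le_exp.2 (by nlinarith [hw.out]))

lemma gaussianReal_Icc_ge (a : ℝ) {c : ℝ} (hc : 0 ≤ c) :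
    ENNReal.ofReal (2 * c * ((√(2 * π))⁻¹ * exp (-(|a| + c) ^ 2 / 2))) ≤
      gaussianReal 0 1 (Set.Icc (a - c) (a + c)) := by
  rw [gaussianReal_apply_eq_integral 0 one_ne_zero]
  refine ENNReal.ofReal_le_ofReal ?_
  calc 2 * c * ((√(2 * π))⁻¹ * exp (-(|a| + c) ^ 2 / 2))
      = ∫ _ in Set.Icc (a - c) (a + c), (√(2 * π))⁻¹ * exp (-(|a| + c) ^ 2 / 2) := by
        rw [setIntegral_const, smul_eq_mul, Real.volume_real_Icc_of_le (by linarith)]; ring_nf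
    _ ≤ ∫ x in Set.Icc (a - c) (a + c), gaussianPDFReal 0 1 x := by
      refine setIntegral_mono_on (integrableOn_const (by simp))
        (integrable_gaussianPDFReal 0 1).integrableOn measurableSet_Icc fun x hx => ?_
      have hx : |x| ≤ |a| + c := abs_le.2 ⟨by cases abs_cases a <;> linarith [hx.1],
        by cases abs_cases a <;> linarith [hx.2]⟩
      simp only [gaussianPDFReal, NNReal.coe_one, mul_one, sub_zero]
      have hsq : x ^ 2 ≤ (|a| + c) ^ 2 := sq_abs x ▸ pow_le_pow_left₀ (abs_nonneg x) hx 2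
      gcongr

lemma gaussianReal_Icc_sqrt_mul_ge {n : ℕ} (hn : 1 ≤ n) (a : ℝ) {δ : ℝ} (hδ : 0 ≤ δ) :
    ENNReal.ofReal (2 * δ * (√(2 * π))⁻¹) * ENNReal.ofReal (exp (n * (-(|a| + δ) ^ 2 / 2))) ≤
      gaussianReal 0 1 (Set.Icc (√n * a - √n * δ) (√n * a + √n * δ)) := by
  refine le_trans ?_ (gaussianReal_Icc_ge (√n * a) (by positivity))
  have hs : 1 ≤ √(n : ℝ) := one_le_sqrt.2 (by exact_mod_cast hn)
  have hexp : (|√n * a| + √n * δ) ^ 2 = n * (|a| + δ) ^ 2 := by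
    rw [abs_mul, abs_of_nonneg (sqrt_nonneg _), ← mul_add, mul_pow, sq_sqrt (Nat.cast_nonneg n)]
  rw [← ENNReal.ofReal_mul (by positivity), hexp, show (n : ℝ) * (-(|a| + δ) ^ 2 / 2) =
    -(n * (|a| + δ) ^ 2) / 2 by ring]
  refine ENNReal.ofReal_le_ofReal ?_
  have : 0 ≤ δ * ((√(2 * π))⁻¹ * exp (-(n * (|a| + δ) ^ 2) / 2)) := by positivity
  nlinarith

lemma gaussianReal_prod_closedBall_sqrt_smul_ge (w₀ : ℝ × ℝ) {δ : ℝ} (hδ : 0 ≤ δ) {n : ℕ}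
    (hn : 1 ≤ n) :
    ENNReal.ofReal (2 * δ * (√(2 * π))⁻¹) ^ 2 *
        ENNReal.ofReal (exp (n * (-(|w₀.1| + δ) ^ 2 / 2 + -(|w₀.2| + δ) ^ 2 / 2))) ≤
      (gaussianReal 0 1).prod (gaussianReal 0 1) (Metric.closedBall (√n • w₀) (√n * δ)) := by
  rw [show √n • w₀ = (√n * w₀.1, √n * w₀.2) from rfl, ← closedBall_prod_same,
    Measure.prod_prod, Real.closedBall_eq_Icc, Real.closedBall_eq_Icc,
    ← ofReal_exp_mul_mul_ofReal_exp_mul, sq, mul_mul_mul_comm]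
  exact mul_le_mul' (gaussianReal_Icc_sqrt_mul_ge hn _ hδ) (gaussianReal_Icc_sqrt_mul_ge hn _ hδ)

end GaussianEstimates

theorem lowerSemicontinuous_of_eqOn_of_eq_top {E : Type*} [TopologicalSpace E]
    {f g : E → ℝ≥0∞} {C : Set E} (hC : IsClosed C) (hg : Continuous g) (hfg : Set.EqOn f g C)
    (hf : ∀ p ∉ C, f p = ⊤) : LowerSemicontinuous f := by
  intro p c hc
  have hlt : ∀ q, (q ∈ C → c < g q) → c < f q := fun q hq => by
    by_cases hqC : q ∈ C
    · exact hfg hqC ▸ hq hqC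
    · exact hf q hqC ▸ hc.trans_le le_top
  by_cases hpC : p ∈ C
  · filter_upwards [hg.continuousAt.eventually_const_lt (hfg hpC ▸ hc)] with q hq
    exact hlt q fun _ => hq
  · filter_upwards [hC.isOpen_compl.mem_nhds hpC] with q hq
    exact hlt q fun h => absurd h hq

section SqRate

def sqMap (w : ℝ × ℝ) : ℝ × ℝ × ℝ := (w.1 ^ 2, w.2 ^ 2, w.1 * w.2)

def sqRate (p : ℝ × ℝ × ℝ) : ℝ≥0∞ :=
  if 0 ≤ p.1 ∧ 0 ≤ p.2.1 ∧ p.2.2 ^ 2 = p.1 * p.2.1 then ENNReal.ofReal (p.1 / 2 + p.2.1 / 2)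
  else ⊤

@[fun_prop]
lemma continuous_sqMap : Continuous sqMap := by unfold sqMap; fun_prop

lemma sqMap_smul (t : ℝ) (w : ℝ × ℝ) : sqMap (t • w) = t ^ 2 • sqMap w := by
  ext <;> simp only [sqMap, Prod.smul_fst, Prod.smul_snd, Prod.smul_mk, smul_eq_mul] <;> ring

lemma sqRate_smul_sqMap {t : ℝ} (ht : 0 ≤ t) (w : ℝ × ℝ) :
    sqRate (t • sqMap w) = ENNReal.ofReal (t * (w.1 ^ 2 + w.2 ^ 2) / 2) := by
  rw [sqRate, if_pos]
  · simp only [sqMap, Prod.smul_mk, smul_eq_mul]; ring_nf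
  · simp only [sqMap, Prod.smul_mk, smul_eq_mul]
    exact ⟨by positivity, by positivity, by ring⟩

lemma sqRate_sqMap (w : ℝ × ℝ) : sqRate (sqMap w) = ENNReal.ofReal ((w.1 ^ 2 + w.2 ^ 2) / 2) := by
  simpa using sqRate_smul_sqMap zero_le_one w

lemma exists_sqMap_eq_of_sqRate_ne_top {p : ℝ × ℝ × ℝ} (hp : sqRate p ≠ ⊤) :
    ∃ w, sqMap w = p := by
  obtain ⟨hx, hy, hz⟩ : 0 ≤ p.1 ∧ 0 ≤ p.2.1 ∧ p.2.2 ^ 2 = p.1 * p.2.1 := by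
    by_contra h; exact hp (if_neg h)
  have habs : √p.1 * √p.2.1 = |p.2.2| := by rw [← sqrt_mul hx, ← hz, sqrt_sq_eq_abs]
  refine ⟨(√p.1, if 0 ≤ p.2.2 then √p.2.1 else -√p.2.1), ?_⟩
  simp only [sqMap, Prod.ext_iff]
  refine ⟨sq_sqrt hx, ?_, ?_⟩
  · split_ifs <;> simp [sq_sqrt hy]
  · split_ifs with hz0
    · rw [habs, abs_of_nonneg hz0]
    · rw [mul_neg, habs, abs_of_neg (not_le.1 hz0), neg_neg]

lemma lowerSemicontinuous_sqRate : LowerSemicontinuous sqRate := by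
  have hC : IsClosed {p : ℝ × ℝ × ℝ | 0 ≤ p.1 ∧ 0 ≤ p.2.1 ∧ p.2.2 ^ 2 = p.1 * p.2.1} := by
    simp only [Set.ofPred_and]
    exact (isClosed_le continuous_const (by fun_prop)).inter
      ((isClosed_le continuous_const (by fun_prop)).inter (isClosed_eq (by fun_prop) (by fun_prop)))
  exact lowerSemicontinuous_of_eqOn_of_eq_top hC (ENNReal.continuous_ofReal.comp (by fun_prop))
    (fun _ hp => if_pos hp) fun _ hp => if_neg hp

lemma sqRate_le_subset_Icc {c : ℝ≥0∞} (hc : c ≠ ⊤) :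
    {p | sqRate p ≤ c} ⊆
      Set.Icc (-(2 * c.toReal), -(2 * c.toReal), -(2 * c.toReal))
        (2 * c.toReal, 2 * c.toReal, 2 * c.toReal) := by
  intro p hp
  obtain ⟨⟨hx, hy, hz⟩, hpc⟩ : (0 ≤ p.1 ∧ 0 ≤ p.2.1 ∧ p.2.2 ^ 2 = p.1 * p.2.1) ∧
      ENNReal.ofReal (p.1 / 2 + p.2.1 / 2) ≤ c := by
    by_cases h : 0 ≤ p.1 ∧ 0 ≤ p.2.1 ∧ p.2.2 ^ 2 = p.1 * p.2.1
    · exact ⟨h, by simpa [sqRate, if_pos h] using hp⟩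
    · exact absurd (top_le_iff.1 (by simpa [sqRate, if_neg h] using hp)) hc
  have hsum : p.1 / 2 + p.2.1 / 2 ≤ c.toReal := (ENNReal.ofReal_le_iff_le_toReal hc).1 hpc
  have hz' : -(2 * c.toReal) ≤ p.2.2 ∧ p.2.2 ≤ 2 * c.toReal :=
    abs_le_of_sq_le_sq' (by nlinarith) (by linarith)
  refine ⟨⟨?_, ?_, ?_⟩, ?_, ?_, ?_⟩ <;> simp only <;> linarith [hz'.1, hz'.2]

lemma goodRate_sqRate : GoodRate sqRate :=
  ⟨lowerSemicontinuous_sqRate, fun _ hc => isCompact_Icc.of_isClosed_subset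
    (lowerSemicontinuous_sqRate.isClosed_preimage _) (sqRate_le_subset_Icc hc)⟩

lemma not_convex_sqRate : ¬ ∀ p q : ℝ × ℝ × ℝ, ∀ a b : ℝ, 0 ≤ a → 0 ≤ b → a + b = 1 →
    sqRate (a • p + b • q) ≤ ENNReal.ofReal a * sqRate p + ENNReal.ofReal b * sqRate q := by
  intro h
  have := h (1, 1, 1) (1, 1, -1) (1 / 2) (1 / 2) (by norm_num) (by norm_num) (by norm_num)
  norm_num [sqRate] at this

end SqRate

lemma setOf_smul_sqMap_mem_subset {F : Set (ℝ × ℝ × ℝ)} {r : ℝ}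
    (hr : ∀ p ∈ F, ENNReal.ofReal r ≤ sqRate p) {n : ℕ} (hn : 0 < n) :
    {w | (n : ℝ)⁻¹ • sqMap w ∈ F} ⊆ {w | 2 * n * r ≤ w.1 ^ 2 + w.2 ^ 2} := by
  intro w hw
  have := hr _ hw
  rw [sqRate_smul_sqMap (by positivity), ENNReal.ofReal_le_ofReal_iff (by positivity)] at this
  calc 2 * n * r ≤ 2 * n * ((n : ℝ)⁻¹ * (w.1 ^ 2 + w.2 ^ 2) / 2) := by gcongr
    _ = w.1 ^ 2 + w.2 ^ 2 := by field_simp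

theorem sqRate_upper_bound (F : Set (ℝ × ℝ × ℝ)) :
    limsup (fun n : ℕ => ((n : ℝ)⁻¹ : EReal) * ENNReal.log
        ((gaussianReal 0 1).prod (gaussianReal 0 1) {w | (n : ℝ)⁻¹ • sqMap w ∈ F})) atTop ≤
      -(⨅ p ∈ F, (sqRate p : EReal)) := by
  refine limsup_natCast_inv_mul_log_le fun a ha => ?_
  obtain ⟨r, har, hr⟩ := EReal.lt_iff_exists_real_btwn.1 (EReal.neg_lt_comm.1 ha)
  set r' := max r 0
  have har' : -a < r' := lt_max_of_lt_left (by exact_mod_cast har)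
  have hr' : ∀ p ∈ F, ENNReal.ofReal r' ≤ sqRate p := fun p hp => by
    have : ((r' : ℝ) : EReal) ≤ sqRate p :=
      max_le hr.le (le_iInf₂ fun _ _ => EReal.coe_ennreal_nonneg _) |>.trans (iInf₂_le p hp)
    rwa [← EReal.coe_ennreal_le_coe_ennreal_iff, EReal.coe_ennreal_ofReal,
      max_eq_left (le_max_right r 0)]
  -- `θ < 1/2` keeps `exp (θ x²)` integrable; `θ → 1/2` recovers the rate `r'`.
  have hθ : ∀ᶠ θ in 𝓝[<] (1 / 2 : ℝ), -a < 2 * θ * r' ∧ 0 ≤ θ :=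
    nhdsWithin_le_nhds (Eventually.and (Tendsto.eventually_const_lt (by norm_num [har'])
      (Continuous.tendsto (by fun_prop) (1 / 2 : ℝ))) (eventually_ge_nhds one_half_pos))
  obtain ⟨θ, ⟨hθa, hθ0⟩, hθ1⟩ := (hθ.and self_mem_nhdsWithin).exists
  refine ⟨_, ENNReal.mul_ne_top (lintegral_exp_mul_sq_gaussianReal_ne_top hθ1)
    (lintegral_exp_mul_sq_gaussianReal_ne_top hθ1), ?_⟩
  filter_upwards [eventually_gt_atTop 0] with n hn
  calc _ ≤ _ := measure_mono (setOf_smul_sqMap_mem_subset hr' hn)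
    _ ≤ _ := measure_prod_le_sq_add_sq_le _ _ hθ0 _
    _ ≤ _ := by
      gcongr
      nlinarith [(Nat.cast_nonneg n : (0 : ℝ) ≤ n)]

lemma closedBall_sqrt_smul_subset {G : Set (ℝ × ℝ × ℝ)} {w₀ : ℝ × ℝ} {δ : ℝ} (hδ : 0 ≤ δ)
    (hball : Metric.closedBall w₀ δ ⊆ sqMap ⁻¹' G) {n : ℕ} (hn : 0 < n) :
    Metric.closedBall (√n • w₀) (√n * δ) ⊆ {w | (n : ℝ)⁻¹ • sqMap w ∈ G} := by
  have hscale := smul_closedBall (√(n : ℝ)) w₀ hδ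
  rw [Real.norm_of_nonneg (sqrt_nonneg n)] at hscale
  rw [← hscale]
  intro w hw
  have := hball ((Set.mem_smul_set_iff_inv_smul_mem₀ (sqrt_pos.2 (by positivity)).ne' _ _).1 hw)
  rwa [Set.mem_preimage, sqMap_smul, inv_pow, sq_sqrt (Nat.cast_nonneg n)] at this

theorem sqRate_lower_bound (G : Set (ℝ × ℝ × ℝ)) (hG : IsOpen G) :
    -(⨅ p ∈ G, (sqRate p : EReal)) ≤
      liminf (fun n : ℕ => ((n : ℝ)⁻¹ : EReal) * ENNReal.log
        ((gaussianReal 0 1).prod (gaussianReal 0 1) {w | (n : ℝ)⁻¹ • sqMap w ∈ G})) atTop := by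
  refine le_liminf_natCast_inv_mul_log fun a ha => ?_
  obtain ⟨p, hpG, hpa⟩ : ∃ p ∈ G, (sqRate p : EReal) < -a := by
    simpa only [iInf_lt_iff, exists_prop] using EReal.lt_neg_comm.1 ha
  obtain ⟨w₀, rfl⟩ := exists_sqMap_eq_of_sqRate_ne_top
    (fun h => by rw [h, EReal.coe_ennreal_top] at hpa; exact not_top_lt hpa)
  have hw₀ : (w₀.1 ^ 2 + w₀.2 ^ 2) / 2 < -a := by
    rw [sqRate_sqMap, EReal.coe_ennreal_ofReal] at hpa
    exact (le_max_left _ 0).trans_lt (by exact_mod_cast hpa)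
  have hδ : ∀ᶠ δ in 𝓝[>] (0 : ℝ), Metric.closedBall w₀ δ ⊆ sqMap ⁻¹' G ∧
      ((|w₀.1| + δ) ^ 2 + (|w₀.2| + δ) ^ 2) / 2 < -a := by
    refine nhdsWithin_le_nhds (Eventually.and ?_ ?_)
    · obtain ⟨ε, hε, hball⟩ := Metric.isOpen_iff.1 (hG.preimage continuous_sqMap) w₀ hpG
      filter_upwards [eventually_lt_nhds hε] with δ hδ
      exact (Metric.closedBall_subset_ball hδ).trans hball
    · exact Tendsto.eventually_lt_const (by simpa [sq_abs] using hw₀)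
        (Continuous.tendsto (by fun_prop) 0)
  obtain ⟨δ, ⟨hball, hδa⟩, hδ0⟩ := (hδ.and self_mem_nhdsWithin).exists
  refine ⟨ENNReal.ofReal (2 * δ * (√(2 * π))⁻¹) ^ 2,
    pow_ne_zero _ (ENNReal.ofReal_pos.2 (by positivity)).ne', ?_⟩
  filter_upwards [eventually_ge_atTop 1] with n hn
  calc _ ≤ _ := by gcongr; linarith
    _ ≤ _ := gaussianReal_prod_closedBall_sqrt_smul_ge w₀ hδ0.le hn
    _ ≤ _ := measure_mono (closedBall_sqrt_smul_subset hδ0.le hball hn)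

open ProbabilityTheory in
/-- For `X, Y` independent standard Gaussians and `Z = (X², Y², XY)`, the sequence `Z/n`
satisfies the LDP on `ℝ³` with the good rate function
`I(x,y,z) = x/2 + y/2` if `x ≥ 0, y ≥ 0, z² = xy` and `+∞` otherwise; this rate function
is not convex. -/
theorem ldp_nonconvex_gaussian {Ω : Type*} [MeasurableSpace Ω] (μ : Measure Ω)
    [IsProbabilityMeasure μ] (X Y : Ω → ℝ) (hX : Measurable X) (hY : Measurable Y)
    (hindep : IndepFun X Y μ)
    (hlawX : μ.map X = gaussianReal 0 1) (hlawY : μ.map Y = gaussianReal 0 1)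
    (I : ℝ × ℝ × ℝ → ℝ≥0∞)
    (hI : ∀ p : ℝ × ℝ × ℝ, I p =
      if 0 ≤ p.1 ∧ 0 ≤ p.2.1 ∧ p.2.2 ^ 2 = p.1 * p.2.1
        then ENNReal.ofReal (p.1 / 2 + p.2.1 / 2) else ⊤) :
    LDP μ
      (fun n ω => ((n : ℝ)⁻¹ * (X ω) ^ 2, (n : ℝ)⁻¹ * (Y ω) ^ 2, (n : ℝ)⁻¹ * (X ω * Y ω)))
      I ∧
    GoodRate I ∧
    ¬ (∀ p q : ℝ × ℝ × ℝ, ∀ a b : ℝ, 0 ≤ a → 0 ≤ b → a + b = 1 →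
        I (a • p + b • q) ≤ ENNReal.ofReal a * I p + ENNReal.ofReal b * I q) := by
  obtain rfl : I = sqRate := funext hI
  have hlaw : μ.map (fun ω => (X ω, Y ω)) = (gaussianReal 0 1).prod (gaussianReal 0 1) := by
    rw [(indepFun_iff_map_prod_eq_prod_map_map hX.aemeasurable hY.aemeasurable).1 hindep,
      hlawX, hlawY]
  have hLDP : LDP (μ.map fun ω => (X ω, Y ω)) (fun n w => (n : ℝ)⁻¹ • sqMap w) sqRate := by
    rw [hlaw]; exact ⟨fun F _ => sqRate_upper_bound F, sqRate_lower_bound⟩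
  have hmeas : ∀ n : ℕ, Measurable fun w => (n : ℝ)⁻¹ • sqMap w := fun n => by fun_prop
  exact ⟨LDP.of_map (hX.prodMk hY) hmeas hLDP, goodRate_sqRate, not_convex_sqRate⟩
end
end

section
/- Let 1 < κ₂ < κ₁ with κ₁ < 2κ₂ − 1. Then the system x₀+x₁ = 1, y₀+y₁ = 1, x₀+κ₁x₁ = κ₂, y₀+κ₁y₁ = κ₂, x₁y₁ < x₀y₀ has NO solution with x₀, y₀, x₁, y₁ > 0; whereas the system x₀+x₁+x₂ = 1, y₀+y₁+y₂ = 1, x₀+κ₁x₁+κ₂x₂ = κ₂, y₀+κ₁y₁+κ₂y₂ = κ₂, r₀² − x₁y₁ + x₂y₂ = 0 DOES have a solution with x₀,y₀,x₁,y₁,x₂,y₂ > 0, r₀ = 0, namely x₀ = y₀ = (κ₁−κ₂)/(κ₁+κ₂−2) and x₁ = y₁ = x₂ = y₂ = (κ₂−1)/(κ₁+κ₂−2). -/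
/-!
Subtracting `x₀ + x₁ = 1` from `x₀ + κ₁ x₁ = κ₂` gives `(κ₁ - 1) x₁ = κ₂ - 1`, so the two
constraints determine `x` and `y` alike and force `x = y`. For nonnegative weights
`x₁² < x₀²` then means `x₁ < x₀`, i.e. `x₁ < 1/2`, i.e. `2 (κ₂ - 1) < κ₁ - 1`, which is excluded
by `κ₁ < 2κ₂ - 1`. With a third weight on `κ₂` the constraints are met by direct computation.
-/

section TwoWeights

variable {κ₁ κ₂ x₀ x₁ : ℝ}

theorem outlier_weight_mul_eq (hsum : x₀ + x₁ = 1) (hmean : x₀ + κ₁ * x₁ = κ₂) :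
    (κ₁ - 1) * x₁ = κ₂ - 1 := by
  linear_combination hmean - hsum

theorem two_mul_lt_one_of_mul_self_lt (hx₀ : 0 ≤ x₀) (hx₁ : 0 ≤ x₁) (hsum : x₀ + x₁ = 1)
    (hlt : x₁ * x₁ < x₀ * x₀) : 2 * x₁ < 1 := by
  have : x₁ < x₀ := (mul_self_lt_mul_self_iff hx₁ hx₀).mpr hlt
  linarith

theorem not_exists_pos_two_weight_solution (hκ₁ : 1 < κ₁) (h3 : κ₁ < 2 * κ₂ - 1) :
    ¬ ∃ x₀ y₀ x₁ y₁ : ℝ, 0 < x₀ ∧ 0 < y₀ ∧ 0 < x₁ ∧ 0 < y₁ ∧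
        x₀ + x₁ = 1 ∧ y₀ + y₁ = 1 ∧ x₀ + κ₁ * x₁ = κ₂ ∧ y₀ + κ₁ * y₁ = κ₂ ∧
        x₁ * y₁ < x₀ * y₀ := by
  rintro ⟨x₀, y₀, x₁, y₁, hx₀, -, hx₁, -, hxsum, hysum, hxmean, hymean, hlt⟩
  have hx := outlier_weight_mul_eq hxsum hxmean
  have hxy₁ : x₁ = y₁ :=
    mul_left_cancel₀ (sub_ne_zero.mpr hκ₁.ne') (hx.trans (outlier_weight_mul_eq hysum hymean).symm)
  have hxy₀ : x₀ = y₀ := by linarith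
  subst hxy₁ hxy₀
  have hhalf := two_mul_lt_one_of_mul_self_lt hx₀.le hx₁.le hxsum hlt
  have := mul_lt_mul_of_pos_left hhalf (sub_pos.mpr hκ₁)
  linarith

end TwoWeights

section ThreeWeights

variable {κ₁ κ₂ : ℝ}

theorem explicit_three_weight_sum (hD : κ₁ + κ₂ - 2 ≠ 0) :
    (κ₁ - κ₂) / (κ₁ + κ₂ - 2) + (κ₂ - 1) / (κ₁ + κ₂ - 2) + (κ₂ - 1) / (κ₁ + κ₂ - 2) = 1 := by
  field_simp
  ring

theorem explicit_three_weight_mean (hD : κ₁ + κ₂ - 2 ≠ 0) :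
    (κ₁ - κ₂) / (κ₁ + κ₂ - 2) + κ₁ * ((κ₂ - 1) / (κ₁ + κ₂ - 2)) +
      κ₂ * ((κ₂ - 1) / (κ₁ + κ₂ - 2)) = κ₂ := by
  field_simp
  ring

end ThreeWeights

/-- Algebraic core of the influence of the second largest eigenvalue: for
`1 < κ₂ < κ₁ < 2κ₂ − 1`, the first system (with one outlier) has no positive solution,
while the second system (with two outliers) has the explicit positive solution
`x₀ = y₀ = (κ₁−κ₂)/(κ₁+κ₂−2)`, `x₁ = y₁ = x₂ = y₂ = (κ₂−1)/(κ₁+κ₂−2)`, `r₀ = 0`. -/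
theorem second_eigenvalue_systems (κ₁ κ₂ : ℝ) (h1 : 1 < κ₂) (h2 : κ₂ < κ₁)
    (h3 : κ₁ < 2 * κ₂ - 1) :
    (¬ ∃ x₀ y₀ x₁ y₁ : ℝ, 0 < x₀ ∧ 0 < y₀ ∧ 0 < x₁ ∧ 0 < y₁ ∧
        x₀ + x₁ = 1 ∧ y₀ + y₁ = 1 ∧ x₀ + κ₁ * x₁ = κ₂ ∧ y₀ + κ₁ * y₁ = κ₂ ∧
        x₁ * y₁ < x₀ * y₀) ∧
    (∃ x₀ y₀ x₁ y₁ x₂ y₂ r₀ : ℝ, 0 < x₀ ∧ 0 < y₀ ∧ 0 < x₁ ∧ 0 < y₁ ∧ 0 < x₂ ∧ 0 < y₂ ∧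
        r₀ = 0 ∧
        x₀ = (κ₁ - κ₂) / (κ₁ + κ₂ - 2) ∧ y₀ = (κ₁ - κ₂) / (κ₁ + κ₂ - 2) ∧
        x₁ = (κ₂ - 1) / (κ₁ + κ₂ - 2) ∧ y₁ = (κ₂ - 1) / (κ₁ + κ₂ - 2) ∧
        x₂ = (κ₂ - 1) / (κ₁ + κ₂ - 2) ∧ y₂ = (κ₂ - 1) / (κ₁ + κ₂ - 2) ∧
        x₀ + x₁ + x₂ = 1 ∧ y₀ + y₁ + y₂ = 1 ∧
        x₀ + κ₁ * x₁ + κ₂ * x₂ = κ₂ ∧ y₀ + κ₁ * y₁ + κ₂ * y₂ = κ₂ ∧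
        r₀ ^ 2 - x₁ * y₁ + x₂ * y₂ = 0) := by
  refine ⟨not_exists_pos_two_weight_solution (h1.trans h2) h3, ?_⟩
  have hD : 0 < κ₁ + κ₂ - 2 := by linarith
  have ha : 0 < (κ₁ - κ₂) / (κ₁ + κ₂ - 2) := div_pos (sub_pos.mpr h2) hD
  have hb : 0 < (κ₂ - 1) / (κ₁ + κ₂ - 2) := div_pos (sub_pos.mpr h1) hD
  exact ⟨_, _, _, _, _, _, 0, ha, ha, hb, hb, hb, hb, rfl, rfl, rfl, rfl, rfl, rfl, rfl,
    explicit_three_weight_sum hD.ne', explicit_three_weight_sum hD.ne',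
    explicit_three_weight_mean hD.ne', explicit_three_weight_mean hD.ne', by ring⟩
end

section
/- Let R be a probability measure on ℝ with compact support [m,M], and suppose x_min < m and x_max > M. Let H(t) = ∫ R(dx)/(t−x) for t ∉ [m,M], and set α_min = x_min − 1/H(x_min), α_max = x_max − 1/H(x_max). Then H(x_min) < 0, H(x_max) > 0, and the inequalities m < α_min ≤ ∫ x R(dx) ≤ α_max < M hold; in particular α_min ≤ α_max. -/
/-!
Both outliers reduce to one fact about a random variable `Y` with `Y ≥ a > 0` a.e. that is not
a.e. equal to `a`: its harmonic mean `(𝔼[Y⁻¹])⁻¹` lies strictly above `a` and, by Jensen's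
inequality for the convex function `y ↦ y⁻¹`, at most `𝔼[Y]`. Take `Y = xmax - X`,
`a = xmax - M` on the right and `Y = X - xmin`, `a = m - xmin` on the left, where `X ∼ R`;
in both cases `Y > a` with positive probability because the other endpoint lies in the support.
-/

open MeasureTheory Set

lemma ae_mem_of_msupport_subset {X : Type*} [TopologicalSpace X] [SecondCountableTopology X]
    [MeasurableSpace X] {R : Measure X} {s : Set X} (h : msupport R ⊆ s) :
    ∀ᵐ x ∂ R, x ∈ s := by
  refine ae_iff.2 (measure_null_of_locally_null _ fun x hx => ?_)
  obtain ⟨U, hU, hU0⟩ : ∃ U ∈ nhds x, R U = 0 := by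
    simpa [msupport] using fun hx' => hx (h hx')
  exact ⟨U, nhdsWithin_le_nhds hU, hU0⟩

section

variable {α : Type*} [MeasurableSpace α] {μ : Measure α}

lemma integral_lt_integral_of_ae_le_of_measure_setOf_lt_ne_zero {f g : α → ℝ}
    (hf : Integrable f μ) (hg : Integrable g μ) (hfg : f ≤ᵐ[μ] g)
    (hlt : μ {x | f x < g x} ≠ 0) : ∫ x, f x ∂μ < ∫ x, g x ∂μ := by
  have hpos : 0 < ∫ x, (g x - f x) ∂μ := by
    refine (integral_pos_iff_support_of_nonneg_ae ?_ (hg.sub hf)).2 ?_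
    · filter_upwards [hfg] with x hx using sub_nonneg.2 hx
    · refine (pos_iff_ne_zero.2 hlt).trans_le (measure_mono fun x hx => ?_)
      exact sub_ne_zero.2 (ne_of_gt hx)
  rwa [integral_sub hg hf, sub_pos] at hpos

variable [IsProbabilityMeasure μ] {Y : α → ℝ} {a : ℝ}

lemma integrable_inv_of_ae_le (hY : AEMeasurable Y μ) (ha : 0 < a)
    (haY : ∀ᵐ x ∂μ, a ≤ Y x) :
    Integrable (fun x => (Y x)⁻¹) μ := by
  refine Integrable.of_bound hY.inv.aestronglyMeasurable a⁻¹ ?_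
  filter_upwards [haY] with x hx
  rw [Real.norm_eq_abs, abs_inv, abs_of_pos (ha.trans_le hx)]
  exact inv_anti₀ ha hx

lemma integral_inv_lt_inv_of_ae_le (hY : AEMeasurable Y μ) (ha : 0 < a)
    (haY : ∀ᵐ x ∂μ, a ≤ Y x) (hlt : μ {x | a < Y x} ≠ 0) :
    ∫ x, (Y x)⁻¹ ∂μ < a⁻¹ := by
  have hlt' : μ {x | (Y x)⁻¹ < a⁻¹} ≠ 0 := by
    refine fun h0 => hlt (measure_mono_null (fun x hx => ?_) h0)
    exact inv_strictAnti₀ ha hx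
  simpa using integral_lt_integral_of_ae_le_of_measure_setOf_lt_ne_zero
    (integrable_inv_of_ae_le hY ha haY) (integrable_const a⁻¹)
    (haY.mono fun x hx => inv_anti₀ ha hx) hlt'

lemma inv_integral_le_integral_inv (hY : Integrable Y μ) (ha : 0 < a)
    (haY : ∀ᵐ x ∂μ, a ≤ Y x) : (∫ x, Y x ∂μ)⁻¹ ≤ ∫ x, (Y x)⁻¹ ∂μ := by
  have hconv : ConvexOn ℝ (Ici a) fun y : ℝ => y⁻¹ := by
    simpa using (convexOn_zpow (𝕜 := ℝ) (-1)).subset (Ici_subset_Ioi.2 ha) (convex_Ici a)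
  exact hconv.map_integral_le (continuousOn_inv₀.mono fun y hy => (ha.trans_le hy).ne')
    isClosed_Ici haY hY (integrable_inv_of_ae_le hY.aemeasurable ha haY)

lemma harmonic_mean_bounds (hY : Integrable Y μ) (ha : 0 < a) (haY : ∀ᵐ x ∂μ, a ≤ Y x)
    (hlt : μ {x | a < Y x} ≠ 0) :
    0 < ∫ x, (Y x)⁻¹ ∂μ ∧ a < (∫ x, (Y x)⁻¹ ∂μ)⁻¹ ∧
      (∫ x, (Y x)⁻¹ ∂μ)⁻¹ ≤ ∫ x, Y x ∂μ := by
  have hmean : a ≤ ∫ x, Y x ∂μ := by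
    simpa using integral_mono_ae (integrable_const a) hY haY
  have hjensen := inv_integral_le_integral_inv hY ha haY
  have hpos : 0 < ∫ x, (Y x)⁻¹ ∂μ := (inv_pos.2 (ha.trans_le hmean)).trans_le hjensen
  refine ⟨hpos, ?_, ?_⟩
  · exact (lt_inv_comm₀ ha hpos).2 (integral_inv_lt_inv_of_ae_le hY.aemeasurable ha haY hlt)
  · exact (inv_le_comm₀ hpos (ha.trans_le hmean)).2 hjensen

end

/-- For a probability measure `R` with support of convex hull `[m, M]` and outliers
`x_min < m`, `x_max > M`, the Hilbert transform `H(t) = ∫ (t−x)⁻¹ dR(x)` satisfies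
`H(x_min) < 0 < H(x_max)` and, with `α_min = x_min − 1/H(x_min)`,
`α_max = x_max − 1/H(x_max)`, one has `m < α_min ≤ ∫ x dR ≤ α_max < M`. -/
theorem hilbert_transform_bounds (R : Measure ℝ) [IsProbabilityMeasure R] (m M : ℝ)
    (hmM : m < M) (hsupp : msupport R ⊆ Set.Icc m M)
    (hm : m ∈ msupport R) (hM : M ∈ msupport R)
    (xmin xmax : ℝ) (h1 : xmin < m) (h2 : M < xmax) :
    (∫ x, (xmin - x)⁻¹ ∂ R) < 0 ∧
    0 < (∫ x, (xmax - x)⁻¹ ∂ R) ∧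
    m < xmin - (∫ x, (xmin - x)⁻¹ ∂ R)⁻¹ ∧
    xmin - (∫ x, (xmin - x)⁻¹ ∂ R)⁻¹ ≤ ∫ x, x ∂ R ∧
    (∫ x, x ∂ R) ≤ xmax - (∫ x, (xmax - x)⁻¹ ∂ R)⁻¹ ∧
    xmax - (∫ x, (xmax - x)⁻¹ ∂ R)⁻¹ < M := by
  have hae : ∀ᵐ x ∂ R, x ∈ Icc m M := ae_mem_of_msupport_subset hsupp
  have hint : Integrable (fun x : ℝ => x) R :=
    ⟨aestronglyMeasurable_id, HasFiniteIntegral.of_mem_Icc m M hae⟩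
  obtain ⟨hLpos, hLlt, hLle⟩ := harmonic_mean_bounds (Y := fun x => x - xmin) (a := m - xmin)
    (hint.sub (integrable_const xmin)) (sub_pos.2 h1)
    (hae.mono fun x hx => sub_le_sub_right hx.1 xmin)
    (by simp only [sub_lt_sub_iff_right]; exact hM _ (Ioi_mem_nhds hmM))
  obtain ⟨hRpos, hRlt, hRle⟩ := harmonic_mean_bounds (Y := fun x => xmax - x) (a := xmax - M)
    ((integrable_const xmax).sub hint) (sub_pos.2 h2)
    (hae.mono fun x hx => sub_le_sub_left hx.2 xmax)
    (by simp only [sub_lt_sub_iff_left]; exact hm _ (Iio_mem_nhds hmM))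
  have hreflect : ∫ x, (xmin - x)⁻¹ ∂ R = -∫ x, (x - xmin)⁻¹ ∂ R := by
    rw [← integral_neg]
    simp only [← inv_neg, neg_sub]
  rw [integral_sub hint (integrable_const xmin), integral_const] at hLle
  rw [integral_sub (integrable_const xmax) hint, integral_const] at hRle
  simp only [probReal_univ, smul_eq_mul, one_mul] at hLle hRle
  rw [hreflect, inv_neg]
  refine ⟨neg_neg_of_pos hLpos, hRpos, ?_, ?_, ?_, ?_⟩ <;> linarith
end
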